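/- Let M > 1, R ≥ 0, σ ≥ 0 be real numbers and set α = 2/(M+1). For signs s₀, s₁ ∈ {−1, +1} define x₁(s₀) = R − α(MR + s₀σ) and x₂(s₀,s₁) = x₁(s₀) − α(M·x₁(s₀) + s₁σ). Then the average of x₂(s₀,s₁)² over the four sign choices equals ((M−1)/(M+1))⁴·R² + (8(1+M²)/(M+1)⁴)·σ²; that is, (1/4)·∑_{s₀∈{−1,1}} ∑_{s₁∈{−1,1}} x₂(s₀,s₁)² = ((M−1)/(M+1))⁴ R² + 8(1+M²)/(1+M)⁴ σ². -/

import Mathlib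

/-!
Each gradient step multiplies the iterate by the contraction factor `c = 1 - α M` and adds the
independent symmetric noise `∓ α σ`. Since the noise has mean zero, the cross terms cancel when
averaging over its signs, so after two steps the mean square is `c⁴ R² + α² (1 + c²) σ²`.
With `α = 2 / (M + 1)` one has `c = (1 - M) / (M + 1)` and `α² (1 + c²) = 8 (1 + M²) / (M + 1)⁴`.
-/

lemma sum_pm_one (f : ℝ → ℝ) : ∑ s ∈ ({-1, 1} : Finset ℝ), f s = f (-1) + f 1 := by
  rw [Finset.sum_pair (by norm_num)]

lemma sum_pm_one_sq_add_mul (a b : ℝ) :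
    ∑ s ∈ ({-1, 1} : Finset ℝ), (a + s * b) ^ 2 = 2 * (a ^ 2 + b ^ 2) := by
  rw [sum_pm_one]
  ring

lemma mean_sq_two_noisy_gradient_steps (α M R σ : ℝ) :
    let x₁ : ℝ → ℝ := fun s₀ => R - α * (M * R + s₀ * σ)
    let x₂ : ℝ → ℝ → ℝ := fun s₀ s₁ => x₁ s₀ - α * (M * x₁ s₀ + s₁ * σ)
    (1 / 4) * ∑ s₀ ∈ ({-1, 1} : Finset ℝ), ∑ s₁ ∈ ({-1, 1} : Finset ℝ), (x₂ s₀ s₁) ^ 2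
      = (1 - α * M) ^ 4 * R ^ 2 + α ^ 2 * (1 + (1 - α * M) ^ 2) * σ ^ 2 := by
  intro x₁ x₂
  have step₁ : ∀ s₀, x₁ s₀ = (1 - α * M) * R + s₀ * (-(α * σ)) := fun _ => by ring
  have step₂ : ∀ s₀ s₁, x₂ s₀ s₁ = (1 - α * M) * x₁ s₀ + s₁ * (-(α * σ)) := fun _ _ => by ring
  simp only [step₂, sum_pm_one_sq_add_mul, step₁]
  rw [sum_pm_one]
  ring

theorem stmt_19 (M R σ : ℝ) (hM : 1 < M) :
    let α : ℝ := 2 / (M + 1)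
    let x₁ : ℝ → ℝ := fun s₀ => R - α * (M * R + s₀ * σ)
    let x₂ : ℝ → ℝ → ℝ := fun s₀ s₁ => x₁ s₀ - α * (M * x₁ s₀ + s₁ * σ)
    (1 / 4) * ∑ s₀ ∈ ({-1, 1} : Finset ℝ), ∑ s₁ ∈ ({-1, 1} : Finset ℝ), (x₂ s₀ s₁) ^ 2
      = ((M - 1) / (M + 1)) ^ 4 * R ^ 2 + 8 * (1 + M ^ 2) / (1 + M) ^ 4 * σ ^ 2 := by
  intro α
  have hM₁ : M + 1 ≠ 0 := by linarith
  have contraction : 1 - α * M = -((M - 1) / (M + 1)) := by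
    simp only [α]
    field_simp
    ring
  refine (mean_sq_two_noisy_gradient_steps α M R σ).trans ?_
  rw [contraction]
  simp only [α]
  field_simp
  ring
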